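/- arXiv:1911.12390 — 6 statements merged into one kernel-verified Lean document; each statement's English description precedes it below -/
import Mathlib

section
/- Let E be a real inner product space and κ : ℝ → ℝ a function satisfying: there exist constants 0 < α < β such that α(t − s) ≤ κ(t)t − κ(s)s ≤ β(t − s) for all 0 ≤ s ≤ t. Then for all ξ, η ∈ E, α‖ξ − η‖² ≤ ⟨κ(‖ξ‖)ξ − κ(‖η‖)η, ξ − η⟩. -/
open scoped RealInnerProductSpace

/-- Monotonicity estimate (Lemma 3.3, (3.4)):
`α‖ξ - η‖² ≤ ⟨κ(‖ξ‖)ξ - κ(‖η‖)η, ξ - η⟩`. -/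
theorem kappa_monotone
    {E : Type*} [NormedAddCommGroup E] [InnerProductSpace ℝ E]
    (κ : ℝ → ℝ) (α β : ℝ) (hα : 0 < α) (hαβ : α < β)
    (h : ∀ s t : ℝ, 0 ≤ s → s ≤ t →
      α * (t - s) ≤ κ t * t - κ s * s ∧ κ t * t - κ s * s ≤ β * (t - s)) :
    ∀ ξ η : E, α * ‖ξ - η‖ ^ 2 ≤ ⟪κ ‖ξ‖ • ξ - κ ‖η‖ • η, ξ - η⟫ := by
  intro ξ η
  wlog hba : ‖η‖ ≤ ‖ξ‖ with H
  · have key := H κ α β hα hαβ h η ξ (le_of_not_ge hba)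
    have e1 : ‖η - ξ‖ = ‖ξ - η‖ := norm_sub_rev _ _
    have e2 : (⟪κ ‖η‖ • η - κ ‖ξ‖ • ξ, η - ξ⟫ : ℝ)
        = ⟪κ ‖ξ‖ • ξ - κ ‖η‖ • η, ξ - η⟫ := by
      rw [show κ ‖η‖ • η - κ ‖ξ‖ • ξ = -(κ ‖ξ‖ • ξ - κ ‖η‖ • η) by abel,
        show η - ξ = -(ξ - η) by abel, inner_neg_neg]
    rw [e1, e2] at key
    exact key
  set a := ‖ξ‖ with ha
  set b := ‖η‖ with hb
  have hb0 : (0:ℝ) ≤ b := norm_nonneg _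
  have ha0 : (0:ℝ) ≤ a := norm_nonneg _
  have ht : ⟪ξ, η⟫ ≤ a * b := real_inner_le_norm ξ η
  have hAB : α * (a - b) ≤ κ a * a - κ b * b := (h b a hb0 hba).1
  have hA0 : α * a ≤ κ a * a := by
    have := (h 0 a le_rfl (hb0.trans hba)).1
    simpa using this
  have hB0 : α * b ≤ κ b * b := by
    have := (h 0 b le_rfl hb0).1
    simpa using this
  have hexp : (⟪κ a • ξ - κ b • η, ξ - η⟫ : ℝ)
      = κ a * a ^ 2 - (κ a + κ b) * ⟪ξ, η⟫ + κ b * b ^ 2 := by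
    simp only [inner_sub_left, inner_sub_right, real_inner_smul_left,
      real_inner_self_eq_norm_sq, real_inner_comm η ξ]
    ring
  have hns : ‖ξ - η‖ ^ 2 = a ^ 2 - 2 * ⟪ξ, η⟫ + b ^ 2 := by
    rw [← real_inner_self_eq_norm_sq]
    simp only [inner_sub_left, inner_sub_right, real_inner_self_eq_norm_sq,
      real_inner_comm η ξ]
    ring
  rw [hexp, hns]
  set t := (⟪ξ, η⟫ : ℝ) with htdef
  rcases eq_or_lt_of_le hb0 with hb' | hb'
  · have hη : η = 0 := by
      rw [← norm_eq_zero]; exact hb'.symm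
    have ht0 : t = 0 := by simp [htdef, hη]
    rw [ht0, ← hb']
    nlinarith [mul_nonneg (sub_nonneg.2 hA0) ha0]
  · have ht' : -(a*b) ≤ t := neg_abs_le t |>.trans' (by
      have := abs_real_inner_le_norm ξ η
      simpa using neg_le_neg this)
    have h1 : 0 ≤ (κ a * a - κ b * b - α * (a - b)) * (b * (a ^ 2 - t)) := by
      apply mul_nonneg (by linarith)
      apply mul_nonneg hb0
      nlinarith
    have h2 : 0 ≤ (κ b * b - α * b) * ((a + b) * (a * b - t)) := by
      apply mul_nonneg (by linarith)
      apply mul_nonneg (by linarith) (by linarith)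
    nlinarith [mul_pos (hb'.trans_le hba) hb', h1, h2]
end

section
/- Let E be a real inner product space and κ : ℝ → ℝ a function satisfying: there exist constants 0 < α < β such that α(t − s) ≤ κ(t)t − κ(s)s ≤ β(t − s) for all 0 ≤ s ≤ t. Then for all ξ, η ∈ E, ‖κ(‖ξ‖)ξ − κ(‖η‖)η‖ ≤ β‖ξ − η‖. -/
open scoped RealInnerProductSpace

/-!
Write `a t = κ t * t`, `r = ‖ξ‖`, `s = ‖η‖`. The identity
`‖k • ξ - l • η‖² = (k r - l s)² + 2 k l (r s - ⟪ξ, η⟫)` splits the squared distance into a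
radial part, bounded by `|a r - a s| ≤ β |r - s|`, and an angular part, bounded because
`0 ≤ κ ≤ β` on `(0, ∞)` and `r s - ⟪ξ, η⟫ ≥ 0` by Cauchy–Schwarz. The same identity with
`k = l = 1` gives `‖ξ - η‖²`.
-/

theorem norm_smul_sub_smul_sq {E : Type*} [NormedAddCommGroup E] [InnerProductSpace ℝ E]
    (k l : ℝ) (ξ η : E) :
    ‖k • ξ - l • η‖ ^ 2 =
      (k * ‖ξ‖ - l * ‖η‖) ^ 2 + 2 * (k * l) * (‖ξ‖ * ‖η‖ - ⟪ξ, η⟫) := by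
  rw [norm_sub_sq_real, real_inner_smul_left, real_inner_smul_right, norm_smul, norm_smul,
    Real.norm_eq_abs, Real.norm_eq_abs, mul_pow, mul_pow, sq_abs, sq_abs]
  ring

theorem abs_apply_mul_sub_apply_mul_le {κ : ℝ → ℝ} {β : ℝ}
    (hmono : ∀ s t : ℝ, 0 ≤ s → s ≤ t → κ s * s ≤ κ t * t)
    (hlip : ∀ s t : ℝ, 0 ≤ s → s ≤ t → κ t * t - κ s * s ≤ β * (t - s))
    {r s : ℝ} (hr : 0 ≤ r) (hs : 0 ≤ s) :
    |κ r * r - κ s * s| ≤ β * |r - s| := by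
  rcases le_total s r with hsr | hrs
  · rw [abs_of_nonneg (sub_nonneg.2 (hmono s r hs hsr)), abs_of_nonneg (sub_nonneg.2 hsr)]
    exact hlip s r hs hsr
  · rw [abs_sub_comm, abs_sub_comm r, abs_of_nonneg (sub_nonneg.2 (hmono r s hr hrs)),
      abs_of_nonneg (sub_nonneg.2 hrs)]
    exact hlip r s hr hrs

theorem mem_Icc_of_apply_mul_bounds {κ : ℝ → ℝ} {β t : ℝ} (ht : 0 < t)
    (hlow : κ 0 * 0 ≤ κ t * t) (hup : κ t * t - κ 0 * 0 ≤ β * (t - 0)) :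
    κ t ∈ Set.Icc 0 β := by
  rw [mul_zero] at hlow
  rw [mul_zero, sub_zero, sub_zero] at hup
  exact ⟨nonneg_of_mul_nonneg_left hlow ht, le_of_mul_le_mul_right hup ht⟩

theorem norm_smul_sub_smul_le {E : Type*} [NormedAddCommGroup E] [InnerProductSpace ℝ E]
    {κ : ℝ → ℝ} {β : ℝ}
    (hmono : ∀ s t : ℝ, 0 ≤ s → s ≤ t → κ s * s ≤ κ t * t)
    (hlip : ∀ s t : ℝ, 0 ≤ s → s ≤ t → κ t * t - κ s * s ≤ β * (t - s)) (ξ η : E) :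
    ‖κ ‖ξ‖ • ξ - κ ‖η‖ • η‖ ≤ β * ‖ξ - η‖ := by
  have hκ : ∀ t, 0 < t → κ t ∈ Set.Icc 0 β := fun t ht =>
    mem_Icc_of_apply_mul_bounds ht (hmono 0 t le_rfl ht.le) (hlip 0 t le_rfl ht.le)
  have hβ : 0 ≤ β := (hκ 1 one_pos).1.trans (hκ 1 one_pos).2
  set r := ‖ξ‖
  set s := ‖η‖
  set g := r * s - ⟪ξ, η⟫
  have hg : 0 ≤ g := sub_nonneg.2 (real_inner_le_norm ξ η)
  have hradial : (κ r * r - κ s * s) ^ 2 ≤ β ^ 2 * (r - s) ^ 2 := by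
    rw [← sq_abs, ← sq_abs (r - s), ← mul_pow]
    exact pow_le_pow_left₀ (abs_nonneg _)
      (abs_apply_mul_sub_apply_mul_le hmono hlip (norm_nonneg ξ) (norm_nonneg η)) 2
  -- if `ξ` or `η` vanishes then `g = 0`, whatever the value of `κ 0`
  have hangular : κ r * κ s * g ≤ β ^ 2 * g := by
    rcases (norm_nonneg ξ).eq_or_lt with hr | hr
    · simp [g, r, norm_eq_zero.1 hr.symm]
    rcases (norm_nonneg η).eq_or_lt with hs | hs
    · simp [g, s, norm_eq_zero.1 hs.symm]
    rw [sq]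
    exact mul_le_mul_of_nonneg_right
      (mul_le_mul (hκ r hr).2 (hκ s hs).2 (hκ s hs).1 hβ) hg
  have hsq : ‖κ r • ξ - κ s • η‖ ^ 2 ≤ (β * ‖ξ - η‖) ^ 2 := by
    have hξη := norm_smul_sub_smul_sq 1 1 ξ η
    simp only [one_smul, one_mul] at hξη
    rw [norm_smul_sub_smul_sq, mul_pow, hξη]
    nlinarith
  exact (pow_le_pow_iff_left₀ (norm_nonneg _) (by positivity) two_ne_zero).1 hsq

theorem kappa_lipschitz_general
    {E : Type*} [NormedAddCommGroup E] [InnerProductSpace ℝ E]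
    (κ : ℝ → ℝ) (α β : ℝ) (hα : 0 < α)
    (h : ∀ s t : ℝ, 0 ≤ s → s ≤ t →
      α * (t - s) ≤ κ t * t - κ s * s ∧ κ t * t - κ s * s ≤ β * (t - s)) :
    ∀ ξ η : E, ‖κ ‖ξ‖ • ξ - κ ‖η‖ • η‖ ≤ β * ‖ξ - η‖ := by
  have hmono : ∀ s t : ℝ, 0 ≤ s → s ≤ t → κ s * s ≤ κ t * t := fun s t hs hst => by
    linarith [(h s t hs hst).1, mul_nonneg hα.le (sub_nonneg.2 hst)]
  exact norm_smul_sub_smul_le hmono fun s t hs hst => (h s t hs hst).2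

/-- Lipschitz estimate (Lemma 3.3, (3.5)):
`‖κ(‖ξ‖)ξ - κ(‖η‖)η‖ ≤ β‖ξ - η‖`. -/
theorem kappa_lipschitz
    {E : Type*} [NormedAddCommGroup E] [InnerProductSpace ℝ E]
    (κ : ℝ → ℝ) (α β : ℝ) (hα : 0 < α) (hαβ : α < β)
    (h : ∀ s t : ℝ, 0 ≤ s → s ≤ t →
      α * (t - s) ≤ κ t * t - κ s * s ∧ κ t * t - κ s * s ≤ β * (t - s)) :
    ∀ ξ η : E, ‖κ ‖ξ‖ • ξ - κ ‖η‖ • η‖ ≤ β * ‖ξ - η‖ :=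
  kappa_lipschitz_general κ α β hα h
end

section
/- Let κ : ℝ → ℝ satisfy: there exist constants 0 < α < β such that α(t − s) ≤ κ(t)t − κ(s)s ≤ β(t − s) for all 0 ≤ s ≤ t. Then the map F : ℝ^d → ℝ^d defined by F(ξ) = κ(|ξ|)ξ (with |·| the Euclidean norm) is a bijection of ℝ^d onto itself; i.e., for every f ∈ ℝ^d the equation κ(|ξ|)ξ = f has a unique solution ξ ∈ ℝ^d. -/
/-- The map `ξ ↦ κ(|ξ|)ξ` on `ℝ^d` is a bijection: for every `f ∈ ℝ^d` the
equation `κ(|ξ|)ξ = f` has a unique solution. -/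
theorem kappa_map_bijective
    (d : ℕ) (κ : ℝ → ℝ) (α β : ℝ) (hα : 0 < α) (hαβ : α < β)
    (h : ∀ s t : ℝ, 0 ≤ s → s ≤ t →
      α * (t - s) ≤ κ t * t - κ s * s ∧ κ t * t - κ s * s ≤ β * (t - s)) :
    Function.Bijective (fun ξ : EuclideanSpace ℝ (Fin d) => κ ‖ξ‖ • ξ) ∧
      ∀ f : EuclideanSpace ℝ (Fin d), ∃! ξ : EuclideanSpace ℝ (Fin d), κ ‖ξ‖ • ξ = f := by
  set g : ℝ → ℝ := fun t => κ t * t with hg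
  have hg0 : g 0 = 0 := by simp [hg]
  have hge : ∀ r, 0 ≤ r → α * r ≤ g r := by
    intro r hr
    have := (h 0 r le_rfl hr).1
    simpa [hg] using this
  have hginj : ∀ r s, 0 ≤ r → 0 ≤ s → g r = g s → r = s := by
    intro r s hr hs heq
    rcases le_total r s with hle | hle
    · have := (h r s hr hle).1
      simp only [hg] at heq
      nlinarith
    · have := (h s r hs hle).1
      simp only [hg] at heq
      nlinarith
  have hκpos : ∀ r, 0 < r → 0 < κ r := by
    intro r hr
    have := hge r hr.le
    simp only [hg] at this
    nlinarith
  have hnorm : ∀ ξ : EuclideanSpace ℝ (Fin d), ‖κ ‖ξ‖ • ξ‖ = g ‖ξ‖ := by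
    intro ξ
    rcases eq_or_ne ξ 0 with rfl | hξ
    · simp [hg0]
    · have hpos : 0 < ‖ξ‖ := norm_pos_iff.mpr hξ
      rw [norm_smul, Real.norm_eq_abs, abs_of_pos (hκpos _ hpos)]
  have hinj : Function.Injective (fun ξ : EuclideanSpace ℝ (Fin d) => κ ‖ξ‖ • ξ) := by
    intro ξ η heq
    simp only at heq
    have hn : g ‖ξ‖ = g ‖η‖ := by rw [← hnorm, ← hnorm, heq]
    have hne : ‖ξ‖ = ‖η‖ := hginj _ _ (norm_nonneg _) (norm_nonneg _) hn
    rcases eq_or_lt_of_le (norm_nonneg ξ) with h0 | h0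
    · have hξ0 : ξ = 0 := norm_eq_zero.mp h0.symm
      have hη0 : η = 0 := norm_eq_zero.mp (by rw [← hne]; exact h0.symm)
      rw [hξ0, hη0]
    · have hκ := hκpos _ h0
      rw [hne] at heq hκ
      exact smul_right_injective _ (ne_of_gt hκ) heq
  have hsurj : Function.Surjective (fun ξ : EuclideanSpace ℝ (Fin d) => κ ‖ξ‖ • ξ) := by
    intro f
    rcases eq_or_ne f 0 with rfl | hf
    · exact ⟨0, by simp⟩
    · have hfpos : 0 < ‖f‖ := norm_pos_iff.mpr hf
      have hlip : LipschitzOnWith β.toNNReal g (Set.Ici 0) := by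
        rw [lipschitzOnWith_iff_dist_le_mul]
        intro x hx y hy
        wlog hxy : y ≤ x generalizing x y
        · rw [dist_comm, dist_comm x y]; exact this y hy x hx (le_of_not_ge hxy)
        have h1 := (h y x hy hxy).1
        have h2 := (h y x hy hxy).2
        have hcoe : (β.toNNReal : ℝ) = β := Real.coe_toNNReal _ (by linarith)
        rw [Real.dist_eq, Real.dist_eq, hcoe,
          abs_of_nonneg (by simp only [hg]; nlinarith : (0:ℝ) ≤ g x - g y),
          abs_of_nonneg (by linarith)]
        simp only [hg]
        linarith
      have hT : (0:ℝ) ≤ ‖f‖ / α := by positivity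
      have hcont : ContinuousOn g (Set.Icc 0 (‖f‖ / α)) :=
        hlip.continuousOn.mono (fun x hx => hx.1)
      have hmem : ‖f‖ ∈ Set.Icc (g 0) (g (‖f‖ / α)) := by
        constructor
        · rw [hg0]; exact hfpos.le
        · calc ‖f‖ = α * (‖f‖ / α) := by field_simp
          _ ≤ g (‖f‖ / α) := hge _ hT
      obtain ⟨r, hrmem, hr⟩ := intermediate_value_Icc hT hcont hmem
      have hrpos : 0 < r := by
        rcases hrmem.1.lt_or_eq with h' | h'
        · exact h'
        · exfalso; rw [← h', hg0] at hr; exact hfpos.ne' hr.symm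
      refine ⟨(r / ‖f‖) • f, ?_⟩
      have hnorm' : ‖(r / ‖f‖) • f‖ = r := by
        rw [norm_smul, Real.norm_eq_abs, abs_of_pos (by positivity)]
        field_simp
      simp only [hnorm', smul_smul]
      have hone : κ r * (r / ‖f‖) = 1 := by
        have hgr : κ r * r = ‖f‖ := hr
        field_simp
        linarith
      rw [hone, one_smul]
  refine ⟨⟨hinj, hsurj⟩, fun f => ?_⟩
  obtain ⟨ξ, hξ⟩ := hsurj f
  exact ⟨ξ, hξ, fun y hy => hinj (hy.trans hξ.symm)⟩
end

section
/- Let (Ω, Σ, μ) be a measure space, d ≥ 1, and let κ : ℝ → ℝ be a measurable function satisfying: there exist constants 0 < α < β such that α(t − s) ≤ κ(t)t − κ(s)s ≤ β(t − s) for all 0 ≤ s ≤ t. Let p, q : Ω → ℝ^d be measurable with ∫ |p|² dμ < ∞ and ∫ |q|² dμ < ∞. Then ∫ ⟨κ(|p(x)|)p(x) − κ(|q(x)|)q(x), p(x) − q(x)⟩ dμ(x) ≥ α ∫ |p(x) − q(x)|² dμ(x). -/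
open scoped RealInnerProductSpace
open MeasureTheory

private lemma key_aux {E : Type*} [NormedAddCommGroup E] [InnerProductSpace ℝ E]
    (κ : ℝ → ℝ) (α : ℝ) (hα : 0 < α)
    (h1 : ∀ t : ℝ, 0 < t → α ≤ κ t)
    (h2 : ∀ s t : ℝ, 0 ≤ s → s ≤ t → α * (t - s) ≤ κ t * t - κ s * s)
    (p q : E) (hba : ‖q‖ ≤ ‖p‖) :
    α * ‖p - q‖ ^ 2 ≤ ⟪κ ‖p‖ • p - κ ‖q‖ • q, p - q⟫ := by
  have hb0 : (0:ℝ) ≤ ‖q‖ := norm_nonneg q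
  have hexp : ⟪κ ‖p‖ • p - κ ‖q‖ • q, p - q⟫ =
      κ ‖p‖ * (‖p‖ * ‖p‖) + κ ‖q‖ * (‖q‖ * ‖q‖) - (κ ‖p‖ + κ ‖q‖) * ⟪p, q⟫ := by
    rw [inner_sub_left, inner_sub_right, inner_sub_right, real_inner_smul_left,
      real_inner_smul_left, real_inner_smul_left, real_inner_smul_left,
      real_inner_self_eq_norm_mul_norm, real_inner_self_eq_norm_mul_norm,
      real_inner_comm q p]
    ring
  have hnorm : ‖p - q‖ ^ 2 = ‖p‖ * ‖p‖ - 2 * ⟪p, q⟫ + ‖q‖ * ‖q‖ := by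
    rw [norm_sub_sq_real]; ring
  have hs : ⟪p, q⟫ ≤ ‖p‖ * ‖q‖ := real_inner_le_norm p q
  rw [hexp, hnorm]
  rcases eq_or_lt_of_le hb0 with hb | hb
  · -- ‖q‖ = 0, so q = 0
    have hq0 : q = 0 := norm_eq_zero.mp hb.symm
    subst hq0
    simp only [inner_zero_right, norm_zero]
    rcases eq_or_lt_of_le (norm_nonneg p) with ha | ha
    · rw [← ha]; ring_nf; simp
    · nlinarith [h1 ‖p‖ ha]
  · have ha : (0:ℝ) < ‖p‖ := lt_of_lt_of_le hb hba
    have hka := h1 ‖p‖ ha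
    have hkb := h1 ‖q‖ hb
    have hmono := h2 ‖q‖ ‖p‖ hb0 hba
    nlinarith [mul_nonneg (by linarith : (0:ℝ) ≤ κ ‖p‖ + κ ‖q‖ - 2 * α)
        (by nlinarith : (0:ℝ) ≤ ‖p‖ * ‖q‖ - ⟪p, q⟫),
      mul_nonneg (by linarith : (0:ℝ) ≤ κ ‖p‖ * ‖p‖ - κ ‖q‖ * ‖q‖ - α * (‖p‖ - ‖q‖))
        (by linarith : (0:ℝ) ≤ ‖p‖ - ‖q‖)]

private lemma key_pointwise {E : Type*} [NormedAddCommGroup E] [InnerProductSpace ℝ E]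
    (κ : ℝ → ℝ) (α : ℝ) (hα : 0 < α)
    (h1 : ∀ t : ℝ, 0 < t → α ≤ κ t)
    (h2 : ∀ s t : ℝ, 0 ≤ s → s ≤ t → α * (t - s) ≤ κ t * t - κ s * s)
    (p q : E) :
    α * ‖p - q‖ ^ 2 ≤ ⟪κ ‖p‖ • p - κ ‖q‖ • q, p - q⟫ := by
  rcases le_total ‖q‖ ‖p‖ with hba | hba
  · exact key_aux κ α hα h1 h2 p q hba
  · have := key_aux κ α hα h1 h2 q p hba
    rw [norm_sub_rev q p] at this
    calc α * ‖p - q‖ ^ 2 ≤ ⟪κ ‖q‖ • q - κ ‖p‖ • p, q - p⟫ := this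
      _ = ⟪κ ‖p‖ • p - κ ‖q‖ • q, p - q⟫ := by
        rw [show κ ‖q‖ • q - κ ‖p‖ • p = -(κ ‖p‖ • p - κ ‖q‖ • q) by abel,
          show q - p = -(p - q) by abel, inner_neg_neg]

/-- Integrated monotonicity estimate (the strong monotonicity of the weak
Galerkin form `a_h`, Lemma 3.4). -/
theorem integrated_monotonicity
    {Ω : Type*} [MeasurableSpace Ω] (μ : Measure Ω) (d : ℕ) (hd : 1 ≤ d)
    (κ : ℝ → ℝ) (hκ : Measurable κ) (α β : ℝ) (hα : 0 < α) (hαβ : α < β)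
    (h : ∀ s t : ℝ, 0 ≤ s → s ≤ t →
      α * (t - s) ≤ κ t * t - κ s * s ∧ κ t * t - κ s * s ≤ β * (t - s))
    (p q : Ω → EuclideanSpace ℝ (Fin d)) (hp : Measurable p) (hq : Measurable q)
    (hp2 : Integrable (fun x => ‖p x‖ ^ 2) μ) (hq2 : Integrable (fun x => ‖q x‖ ^ 2) μ) :
    α * ∫ x, ‖p x - q x‖ ^ 2 ∂μ
      ≤ ∫ x, ⟪κ ‖p x‖ • p x - κ ‖q x‖ • q x, p x - q x⟫ ∂μ := by
  have hβ : (0:ℝ) < β := hα.trans hαβ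
  have h1 : ∀ t : ℝ, 0 < t → α ≤ κ t := by
    intro t ht
    have h0 := (h 0 t le_rfl ht.le).1
    simp only [mul_zero, zero_mul, sub_zero] at h0
    exact le_of_mul_le_mul_right (by linarith [h0]) ht
  have h2 : ∀ s t : ℝ, 0 ≤ s → s ≤ t → α * (t - s) ≤ κ t * t - κ s * s :=
    fun s t hs hst => (h s t hs hst).1
  have hub : ∀ t : ℝ, 0 < t → κ t ≤ β := by
    intro t ht
    have h0 := (h 0 t le_rfl ht.le).2
    simp only [mul_zero, zero_mul, sub_zero] at h0
    exact le_of_mul_le_mul_right (by linarith [h0]) ht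
  -- norm bound : ‖κ ‖x‖ • x‖ ≤ β * ‖x‖
  have hsmul_bound : ∀ x : EuclideanSpace ℝ (Fin d), ‖κ ‖x‖ • x‖ ≤ β * ‖x‖ := by
    intro x
    rw [norm_smul, Real.norm_eq_abs]
    rcases eq_or_lt_of_le (norm_nonneg x) with hx | hx
    · rw [← hx]; simp
    · have := h1 ‖x‖ hx
      have := hub ‖x‖ hx
      rw [abs_of_pos (by linarith)]
      exact mul_le_mul_of_nonneg_right (by linarith) (norm_nonneg x)
  -- integrability of the RHS integrand
  have hmeas : Measurable fun x =>
      ⟪κ ‖p x‖ • p x - κ ‖q x‖ • q x, p x - q x⟫ := by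
    exact Measurable.inner (((hκ.comp hp.norm).smul hp).sub ((hκ.comp hq.norm).smul hq))
      (hp.sub hq)
  have hmaj : Integrable (fun x => 2 * β * (‖p x‖ ^ 2 + ‖q x‖ ^ 2)) μ :=
    (hp2.add hq2).const_mul (2 * β)
  have hg : Integrable (fun x => ⟪κ ‖p x‖ • p x - κ ‖q x‖ • q x, p x - q x⟫) μ := by
    refine hmaj.mono' hmeas.aestronglyMeasurable (Filter.Eventually.of_forall fun x => ?_)
    rw [Real.norm_eq_abs]
    have h1' := abs_real_inner_le_norm (κ ‖p x‖ • p x - κ ‖q x‖ • q x) (p x - q x)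
    have h2' : ‖κ ‖p x‖ • p x - κ ‖q x‖ • q x‖ ≤ β * ‖p x‖ + β * ‖q x‖ :=
      (norm_sub_le _ _).trans (add_le_add (hsmul_bound _) (hsmul_bound _))
    have h3' : ‖p x - q x‖ ≤ ‖p x‖ + ‖q x‖ := norm_sub_le _ _
    have hpn := norm_nonneg (p x); have hqn := norm_nonneg (q x)
    nlinarith [sq_nonneg (‖p x‖ - ‖q x‖), norm_nonneg (κ ‖p x‖ • p x - κ ‖q x‖ • q x)]
  rw [← integral_const_mul]
  exact integral_mono_of_nonneg
    (Filter.Eventually.of_forall fun x => mul_nonneg hα.le (sq_nonneg _)) hg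
    (Filter.Eventually.of_forall fun x => key_pointwise κ α hα h1 h2 (p x) (q x))
end

section
/- Let (Ω, Σ, μ) be a measure space, d ≥ 1, and let κ : ℝ → ℝ be a measurable function satisfying: there exist constants 0 < α < β such that α(t − s) ≤ κ(t)t − κ(s)s ≤ β(t − s) for all 0 ≤ s ≤ t. Let p, q : Ω → ℝ^d be measurable with ∫ |p|² dμ < ∞ and ∫ |q|² dμ < ∞. Then ∫ |κ(|p(x)|)p(x) − κ(|q(x)|)q(x)|² dμ(x) ≤ β² ∫ |p(x) − q(x)|² dμ(x). -/
open scoped RealInnerProductSpace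
open MeasureTheory

private lemma scalar_ineq (β κt κs t s c : ℝ) (hs : 0 ≤ s) (hst : s ≤ t)
    (hκt0 : 0 ≤ κt) (hκtβ : κt ≤ β) (hκs0 : 0 ≤ κs) (hκsβ : κs ≤ β)
    (hlip : κt * t - κs * s ≤ β * (t - s)) (hmono : 0 ≤ κt * t - κs * s)
    (hc : c ≤ t * s) :
    (κt * t) ^ 2 + (κs * s) ^ 2 - 2 * (κt * κs) * c
      ≤ β ^ 2 * (t ^ 2 + s ^ 2 - 2 * c) := by
  nlinarith [mul_nonneg (sub_nonneg.2 hc)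
      (sub_nonneg.2 (mul_le_mul hκtβ hκsβ hκs0 (le_trans hκt0 hκtβ))),
    mul_nonneg hmono (sub_nonneg.2 hlip),
    mul_nonneg (mul_nonneg hκs0 hs) hmono,
    mul_nonneg (mul_nonneg hκt0 (le_trans hs hst)) hmono]

private lemma ptwise_half {d : ℕ} (κ : ℝ → ℝ) (α β : ℝ) (hα : 0 < α) (hαβ : α < β)
    (h : ∀ s t : ℝ, 0 ≤ s → s ≤ t →
      α * (t - s) ≤ κ t * t - κ s * s ∧ κ t * t - κ s * s ≤ β * (t - s))
    (a b : EuclideanSpace ℝ (Fin d)) (hab : ‖b‖ ≤ ‖a‖) :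
    ‖κ ‖a‖ • a - κ ‖b‖ • b‖ ^ 2 ≤ β ^ 2 * ‖a - b‖ ^ 2 := by
  have hβ : (0:ℝ) < β := hα.trans hαβ
  set t := ‖a‖ with ht
  set s := ‖b‖ with hs
  have ht0 : 0 ≤ t := norm_nonneg a
  have hs0 : 0 ≤ s := norm_nonneg b
  -- basic consequences for a positive radius r : α ≤ κ r ≤ β
  have hbound : ∀ r : ℝ, 0 < r → 0 ≤ κ r ∧ κ r ≤ β := by
    intro r hr
    obtain ⟨h1, h2⟩ := h 0 r le_rfl hr.le
    simp only [mul_zero, zero_mul, sub_zero] at h1 h2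
    constructor
    · have : 0 ≤ κ r * r := le_trans (by positivity) h1
      nlinarith
    · exact le_of_mul_le_mul_right (by linarith) hr
  by_cases hta : t = 0
  · -- a = 0, hence b = 0
    have ha : a = 0 := norm_eq_zero.mp hta
    have hb : b = 0 := norm_eq_zero.mp (le_antisymm (hta ▸ hab) hs0)
    simp [ha, hb]
  · have htpos : 0 < t := lt_of_le_of_ne ht0 (Ne.symm hta)
    obtain ⟨hκt0, hκtβ⟩ := hbound t htpos
    by_cases hsb : s = 0
    · -- b = 0
      have hb : b = 0 := norm_eq_zero.mp hsb
      have : ‖κ t • a‖ ^ 2 ≤ β ^ 2 * ‖a‖ ^ 2 := by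
        rw [norm_smul, Real.norm_eq_abs, abs_of_nonneg hκt0, mul_pow]
        have := sq_nonneg t
        nlinarith [mul_le_mul hκtβ hκtβ hκt0 hβ.le, sq_nonneg t]
      simpa [hb] using this
    · have hspos : 0 < s := lt_of_le_of_ne hs0 (Ne.symm hsb)
      obtain ⟨hκs0, hκsβ⟩ := hbound s hspos
      obtain ⟨hmono', hlip⟩ := h s t hs0 hab
      have hmono : 0 ≤ κ t * t - κ s * s :=
        le_trans (by nlinarith) hmono'
      have hc : ⟪a, b⟫ ≤ t * s := real_inner_le_norm a b
      have e1 : ‖κ t • a - κ s • b‖ ^ 2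
          = (κ t * t) ^ 2 + (κ s * s) ^ 2 - 2 * (κ t * κ s) * ⟪a, b⟫ := by
        rw [norm_sub_sq_real, inner_smul_left, inner_smul_right, norm_smul, norm_smul,
          Real.norm_eq_abs, Real.norm_eq_abs, abs_of_nonneg hκt0, abs_of_nonneg hκs0]
        simp only [conj_trivial]
        ring
      have e2 : ‖a - b‖ ^ 2 = t ^ 2 + s ^ 2 - 2 * ⟪a, b⟫ := by
        rw [norm_sub_sq_real]; ring
      rw [e1, e2]
      exact scalar_ineq β (κ t) (κ s) t s ⟪a, b⟫ hs0 hab hκt0 hκtβ hκs0 hκsβ hlip hmono hc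

private lemma ptwise {d : ℕ} (κ : ℝ → ℝ) (α β : ℝ) (hα : 0 < α) (hαβ : α < β)
    (h : ∀ s t : ℝ, 0 ≤ s → s ≤ t →
      α * (t - s) ≤ κ t * t - κ s * s ∧ κ t * t - κ s * s ≤ β * (t - s))
    (a b : EuclideanSpace ℝ (Fin d)) :
    ‖κ ‖a‖ • a - κ ‖b‖ • b‖ ^ 2 ≤ β ^ 2 * ‖a - b‖ ^ 2 := by
  rcases le_total ‖b‖ ‖a‖ with hab | hab
  · exact ptwise_half κ α β hα hαβ h a b hab
  · have := ptwise_half κ α β hα hαβ h b a hab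
    rwa [norm_sub_rev, norm_sub_rev b a] at this

/-- Integrated Lipschitz estimate (used for the Lipschitz continuity of the
weak Galerkin form `a_h`, Lemma 3.5). -/
theorem integrated_lipschitz
    {Ω : Type*} [MeasurableSpace Ω] (μ : Measure Ω) (d : ℕ) (hd : 1 ≤ d)
    (κ : ℝ → ℝ) (hκ : Measurable κ) (α β : ℝ) (hα : 0 < α) (hαβ : α < β)
    (h : ∀ s t : ℝ, 0 ≤ s → s ≤ t →
      α * (t - s) ≤ κ t * t - κ s * s ∧ κ t * t - κ s * s ≤ β * (t - s))
    (p q : Ω → EuclideanSpace ℝ (Fin d)) (hp : Measurable p) (hq : Measurable q)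
    (hp2 : Integrable (fun x => ‖p x‖ ^ 2) μ) (hq2 : Integrable (fun x => ‖q x‖ ^ 2) μ) :
    ∫ x, ‖κ ‖p x‖ • p x - κ ‖q x‖ • q x‖ ^ 2 ∂μ
      ≤ β ^ 2 * ∫ x, ‖p x - q x‖ ^ 2 ∂μ := by
  have hpq2 : Integrable (fun x => ‖p x - q x‖ ^ 2) μ := by
    refine Integrable.mono ((hp2.add hp2).add (hq2.add hq2)) ?_ ?_
    · exact (((hp.sub hq).norm.pow_const 2)).aestronglyMeasurable
    · filter_upwards with x
      have hb : ‖p x - q x‖ ^ 2 ≤ ‖p x‖ ^ 2 + ‖p x‖ ^ 2 + (‖q x‖ ^ 2 + ‖q x‖ ^ 2) := by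
        nlinarith [mul_self_le_mul_self (norm_nonneg (p x - q x)) (norm_sub_le (p x) (q x)),
          sq_nonneg (‖p x‖ - ‖q x‖), norm_nonneg (p x), norm_nonneg (q x)]
      calc ‖‖p x - q x‖ ^ 2‖ = ‖p x - q x‖ ^ 2 := by
              rw [Real.norm_eq_abs, abs_of_nonneg (sq_nonneg _)]
        _ ≤ ‖p x‖ ^ 2 + ‖p x‖ ^ 2 + (‖q x‖ ^ 2 + ‖q x‖ ^ 2) := hb
        _ ≤ ‖((fun x => ‖p x‖ ^ 2) + (fun x => ‖p x‖ ^ 2)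
              + ((fun x => ‖q x‖ ^ 2) + (fun x => ‖q x‖ ^ 2))) x‖ := by
              simp only [Pi.add_apply, Real.norm_eq_abs]
              exact le_abs_self _
  calc ∫ x, ‖κ ‖p x‖ • p x - κ ‖q x‖ • q x‖ ^ 2 ∂μ
      ≤ ∫ x, β ^ 2 * ‖p x - q x‖ ^ 2 ∂μ := by
        refine integral_mono_of_nonneg ?_ (hpq2.const_mul _) ?_
        · filter_upwards with x using sq_nonneg _
        · filter_upwards with x using ptwise κ α β hα hαβ h (p x) (q x)
    _ = β ^ 2 * ∫ x, ‖p x - q x‖ ^ 2 ∂μ := integral_const_mul _ _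
end

section
/- Let (Ω, Σ, μ) be a measure space, d ≥ 1, and let κ : ℝ → ℝ be a measurable function satisfying: there exist constants 0 < α < β such that α(t − s) ≤ κ(t)t − κ(s)s ≤ β(t − s) for all 0 ≤ s ≤ t. Let p, q, r : Ω → ℝ^d be measurable and square integrable with respect to μ. Then |∫ ⟨κ(|p(x)|)p(x) − κ(|q(x)|)q(x), r(x)⟩ dμ(x)| ≤ β (∫ |p(x) − q(x)|² dμ(x))^{1/2} (∫ |r(x)|² dμ(x))^{1/2}. -/
/-!
Writing `φ t = κ t * t`, Assumption 1 says that `φ` is nondecreasing and `β`-Lipschitz on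
`[0, ∞)`. With `t = ‖a‖`, `s = ‖b‖` one has the exact decomposition
`‖κ t • a - κ s • b‖² = (φ t - φ s)² + 2 κ t κ s (t s - ⟪a, b⟫)`,
and likewise `‖a - b‖² = (t - s)² + 2 (t s - ⟪a, b⟫)`. The first terms compare by the Lipschitz
bound, the second ones because `|κ| ≤ β` on `(0, ∞)` and `t s - ⟪a, b⟫ ≥ 0`; hence the map
`a ↦ κ ‖a‖ • a` is `β`-Lipschitz. Integrating against `r` and applying Cauchy–Schwarz in `L²`
concludes.
-/

open scoped RealInnerProductSpace
open MeasureTheory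

section Radial

variable {E : Type*} [NormedAddCommGroup E] [InnerProductSpace ℝ E]

theorem norm_smul_sub_smul_sq_s14 (x y : ℝ) (a b : E) :
    ‖x • a - y • b‖ ^ 2
      = (x * ‖a‖ - y * ‖b‖) ^ 2 + 2 * (x * y) * (‖a‖ * ‖b‖ - ⟪a, b⟫) := by
  rw [norm_sub_sq_real, norm_smul, norm_smul, real_inner_smul_left, real_inner_smul_right,
    Real.norm_eq_abs, Real.norm_eq_abs, mul_pow, mul_pow, sq_abs, sq_abs]
  ring

variable {κ : ℝ → ℝ} {β : ℝ}

theorem abs_mul_self_sub_mul_self_le {α : ℝ} (hα : 0 ≤ α)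
    (h : ∀ s t : ℝ, 0 ≤ s → s ≤ t →
      α * (t - s) ≤ κ t * t - κ s * s ∧ κ t * t - κ s * s ≤ β * (t - s))
    (s t : ℝ) (hs : 0 ≤ s) (ht : 0 ≤ t) : |κ t * t - κ s * s| ≤ β * |t - s| := by
  wlog hst : s ≤ t generalizing s t
  · rw [abs_sub_comm, abs_sub_comm t]
    exact this t s ht hs (le_of_not_ge hst)
  obtain ⟨h_lo, h_hi⟩ := h s t hs hst
  rwa [abs_of_nonneg ((mul_nonneg hα (sub_nonneg.2 hst)).trans h_lo),
    abs_of_nonneg (sub_nonneg.2 hst)]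

variable (hκ : ∀ s t : ℝ, 0 ≤ s → 0 ≤ t → |κ t * t - κ s * s| ≤ β * |t - s|)
include hκ

theorem nonneg_of_abs_mul_self_lipschitz : 0 ≤ β := by
  simpa using (abs_nonneg _).trans (hκ 0 1 le_rfl zero_le_one)

theorem abs_le_of_abs_mul_self_lipschitz {t : ℝ} (ht : 0 < t) : |κ t| ≤ β := by
  have h := hκ 0 t le_rfl ht.le
  rw [mul_zero, sub_zero, sub_zero, abs_mul, abs_of_pos ht] at h
  exact le_of_mul_le_mul_right h ht

theorem norm_smul_norm_sub_smul_norm_le (a b : E) :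
    ‖κ ‖a‖ • a - κ ‖b‖ • b‖ ≤ β * ‖a - b‖ := by
  have hβ := nonneg_of_abs_mul_self_lipschitz hκ
  set t := ‖a‖
  set s := ‖b‖
  have h_cs : 0 ≤ t * s - ⟪a, b⟫ := sub_nonneg.2 (real_inner_le_norm a b)
  have h_radial : (κ t * t - κ s * s) ^ 2 ≤ β ^ 2 * (t - s) ^ 2 := by
    calc (κ t * t - κ s * s) ^ 2 = |κ t * t - κ s * s| ^ 2 := (sq_abs _).symm
      _ ≤ (β * |t - s|) ^ 2 :=
          pow_le_pow_left₀ (abs_nonneg _) (hκ s t (norm_nonneg b) (norm_nonneg a)) 2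
      _ = β ^ 2 * (t - s) ^ 2 := by rw [mul_pow, sq_abs]
  have h_angular : κ t * κ s * (t * s - ⟪a, b⟫) ≤ β ^ 2 * (t * s - ⟪a, b⟫) := by
    rcases h_cs.eq_or_lt with h_eq | h_pos
    · rw [← h_eq, mul_zero, mul_zero]
    have hts : 0 < t * s := by linarith [neg_le_of_abs_le (abs_real_inner_le_norm a b)]
    have ht : 0 < t := pos_of_mul_pos_left hts (norm_nonneg b)
    have hs : 0 < s := pos_of_mul_pos_right hts (norm_nonneg a)
    have h_prod : κ t * κ s ≤ β ^ 2 := by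
      rw [sq]
      calc κ t * κ s ≤ |κ t| * |κ s| := (le_abs_self _).trans_eq (abs_mul _ _)
        _ ≤ β * β := mul_le_mul (abs_le_of_abs_mul_self_lipschitz hκ ht)
            (abs_le_of_abs_mul_self_lipschitz hκ hs) (abs_nonneg _) hβ
    exact mul_le_mul_of_nonneg_right h_prod h_pos.le
  refine le_of_pow_le_pow_left₀ two_ne_zero (by positivity) ?_
  have h_diff : ‖a - b‖ ^ 2 = (t - s) ^ 2 + 2 * (t * s - ⟪a, b⟫) := by
    rw [norm_sub_sq_real]; ring
  rw [norm_smul_sub_smul_sq_s14, mul_pow, h_diff]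
  nlinarith

end Radial

section Integral

variable {Ω : Type*} [MeasurableSpace Ω] {μ : Measure Ω}

theorem integral_norm_mul_norm_le_of_memLp_two {F G : Type*} [NormedAddCommGroup F]
    [NormedAddCommGroup G] {u : Ω → F} {v : Ω → G} (hu : MemLp u 2 μ) (hv : MemLp v 2 μ) :
    ∫ x, ‖u x‖ * ‖v x‖ ∂μ
      ≤ (∫ x, ‖u x‖ ^ 2 ∂μ) ^ ((1 : ℝ) / 2) * (∫ x, ‖v x‖ ^ 2 ∂μ) ^ ((1 : ℝ) / 2) := by
  have h := integral_mul_norm_le_Lp_mul_Lq (μ := μ) Real.HolderConjugate.two_two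
    (by simpa using hu.norm) (by simpa using hv.norm)
  simpa only [norm_norm, Real.rpow_two] using h

variable {E : Type*} [NormedAddCommGroup E] [InnerProductSpace ℝ E]

theorem abs_integral_inner_le_of_norm_le {F : Type*} [NormedAddCommGroup F] {f v : Ω → E}
    {u : Ω → F} {c : ℝ} (hc : 0 ≤ c) (hf : ∀ x, ‖f x‖ ≤ c * ‖u x‖)
    (hu : MemLp u 2 μ) (hv : MemLp v 2 μ) :
    |∫ x, ⟪f x, v x⟫ ∂μ|
      ≤ c * (∫ x, ‖u x‖ ^ 2 ∂μ) ^ ((1 : ℝ) / 2) * (∫ x, ‖v x‖ ^ 2 ∂μ) ^ ((1 : ℝ) / 2) := by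
  have h_int : Integrable (fun x => c * (‖u x‖ * ‖v x‖)) μ :=
    (hu.norm.integrable_mul hv.norm).const_mul c
  calc |∫ x, ⟪f x, v x⟫ ∂μ| ≤ ∫ x, |⟪f x, v x⟫| ∂μ := abs_integral_le_integral_abs
    _ ≤ ∫ x, c * (‖u x‖ * ‖v x‖) ∂μ :=
        integral_mono_of_nonneg (.of_forall fun x => abs_nonneg _) h_int (.of_forall fun x =>
          (abs_real_inner_le_norm _ _).trans <| (mul_le_mul_of_nonneg_right (hf x)
            (norm_nonneg _)).trans_eq (mul_assoc _ _ _))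
    _ = c * ∫ x, ‖u x‖ * ‖v x‖ ∂μ := integral_const_mul c _
    _ ≤ _ := by
        rw [mul_assoc]
        exact mul_le_mul_of_nonneg_left (integral_norm_mul_norm_le_of_memLp_two hu hv) hc

end Integral

theorem integrated_form_lipschitz_general
    {Ω : Type*} [MeasurableSpace Ω] (μ : Measure Ω) (d : ℕ)
    (κ : ℝ → ℝ) (α β : ℝ) (hα : 0 < α)
    (h : ∀ s t : ℝ, 0 ≤ s → s ≤ t →
      α * (t - s) ≤ κ t * t - κ s * s ∧ κ t * t - κ s * s ≤ β * (t - s))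
    (p q r : Ω → EuclideanSpace ℝ (Fin d))
    (hp : Measurable p) (hq : Measurable q) (hr : Measurable r)
    (hp2 : Integrable (fun x => ‖p x‖ ^ 2) μ) (hq2 : Integrable (fun x => ‖q x‖ ^ 2) μ)
    (hr2 : Integrable (fun x => ‖r x‖ ^ 2) μ) :
    |∫ x, ⟪κ ‖p x‖ • p x - κ ‖q x‖ • q x, r x⟫ ∂μ|
      ≤ β * (∫ x, ‖p x - q x‖ ^ 2 ∂μ) ^ ((1 : ℝ) / 2)
          * (∫ x, ‖r x‖ ^ 2 ∂μ) ^ ((1 : ℝ) / 2) := by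
  have hκ := abs_mul_self_sub_mul_self_le hα.le h
  have memLp_two {f : Ω → EuclideanSpace ℝ (Fin d)} (hf : Measurable f)
      (hf2 : Integrable (fun x => ‖f x‖ ^ 2) μ) : MemLp f 2 μ :=
    (memLp_two_iff_integrable_sq_norm hf.aestronglyMeasurable).2 hf2
  exact abs_integral_inner_le_of_norm_le (nonneg_of_abs_mul_self_lipschitz hκ)
    (fun x => norm_smul_norm_sub_smul_norm_le hκ (p x) (q x))
    ((memLp_two hp hp2).sub (memLp_two hq hq2)) (memLp_two hr hr2)

/-- Lipschitz continuity of the weak Galerkin form `a_h` (Lemma 3.5):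
`|a_h(u₁;u₁,v) - a_h(u₂;u₂,v)| ≤ β |||u₁ - u₂||| |||v|||`, written with
`p = ∇_w u₁`, `q = ∇_w u₂`, `r = ∇_w v`. -/
theorem integrated_form_lipschitz
    {Ω : Type*} [MeasurableSpace Ω] (μ : Measure Ω) (d : ℕ) (hd : 1 ≤ d)
    (κ : ℝ → ℝ) (hκ : Measurable κ) (α β : ℝ) (hα : 0 < α) (hαβ : α < β)
    (h : ∀ s t : ℝ, 0 ≤ s → s ≤ t →
      α * (t - s) ≤ κ t * t - κ s * s ∧ κ t * t - κ s * s ≤ β * (t - s))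
    (p q r : Ω → EuclideanSpace ℝ (Fin d))
    (hp : Measurable p) (hq : Measurable q) (hr : Measurable r)
    (hp2 : Integrable (fun x => ‖p x‖ ^ 2) μ) (hq2 : Integrable (fun x => ‖q x‖ ^ 2) μ)
    (hr2 : Integrable (fun x => ‖r x‖ ^ 2) μ) :
    |∫ x, ⟪κ ‖p x‖ • p x - κ ‖q x‖ • q x, r x⟫ ∂μ|
      ≤ β * (∫ x, ‖p x - q x‖ ^ 2 ∂μ) ^ ((1 : ℝ) / 2)
          * (∫ x, ‖r x‖ ^ 2 ∂μ) ^ ((1 : ℝ) / 2) :=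
  integrated_form_lipschitz_general μ d κ α β hα h p q r hp hq hr hp2 hq2 hr2
end
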